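/- Let (Z_U, Z_V) be a random vector on the unit circle Ω = {z ∈ ℂ : |z| = 1} with density c(z_u, z_v) = (1/(4π²)) (1-|ψ|²)/|1 - ψ z_v \bar{z_u}|² (the BC₊(ψ) model, |ψ| < 1). Then for integers j, k ∈ ℤ, E(Z_U^j Z_V^k) = ψ^j if j = -k ≥ 0, equals \bar{ψ}^{-j} if j = -k < 0, and equals 0 otherwise. -/

import Mathlib

open MeasureTheory Real

/-- Arc-length measure on the unit circle `Ω = {z : ℂ | |z| = 1}`, obtained as the
image of Lebesgue measure on `(0, 2π]` under `θ ↦ exp(iθ)`; it has total mass `2π`. -/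
noncomputable def circleMeasure : Measure ℂ :=
  Measure.map (fun θ : ℝ => Complex.exp (θ * Complex.I))
    (volume.restrict (Set.Ioc 0 (2 * Real.pi)))

/-- The density of the `BC₊(ψ)` model on `Ω × Ω`:
`c(z_u, z_v) = (1/(4π²)) (1-|ψ|²)/|1 - ψ z_v conj z_u|²`. -/
noncomputable def bcDensity (ψ : ℂ) (p : ℂ × ℂ) : ℝ :=
  (1 / (4 * Real.pi ^ 2)) * (1 - ‖ψ‖ ^ 2)
    / ‖1 - ψ * p.2 * (starRingEnd ℂ) p.1‖ ^ 2

/-- The `BC₊(ψ)` distribution on the torus `Ω × Ω`. -/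
noncomputable def BCplus (ψ : ℂ) : Measure (ℂ × ℂ) :=
  (circleMeasure.prod circleMeasure).withDensity
    (fun p => ENNReal.ofReal (bcDensity ψ p))

/-! For `‖q‖ < 1` and `‖w‖ = 1` the Poisson kernel `(1 - ‖q‖²) / ‖1 - q w‖²` equals
`(1 - q w)⁻¹ + conj (q w) (1 - conj (q w))⁻¹`, so it is the absolutely convergent Laurent series
`∑ₙ aₙ(q) wⁿ` with `aₙ(q) = qⁿ` for `n ≥ 0` and `conj q ^ (-n)` for `n < 0`. With `q = ψ conj u`
this expands the `BC₊(ψ)` density at `(u, v)` as `(4π²)⁻¹ ∑ₙ aₙ(ψ) u⁻ⁿ vⁿ`; integrating `u^j v^k`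
term by term over the torus, only the term `n = j = -k` survives.

The `(0, 0)` moment shows that `BC₊(ψ)` is not the zero measure, which is what makes `(Z_U, Z_V)`
a.e.-measurable: `Measure.map` of a non-measurable map is `0`. -/

open ComplexConjugate

noncomputable def poissonCoeff (q : ℂ) (n : ℤ) : ℂ :=
  if 0 ≤ n then q ^ n.toNat else conj q ^ (-n).toNat

lemma norm_poissonCoeff (q : ℂ) (n : ℤ) : ‖poissonCoeff q n‖ = ‖q‖ ^ n.natAbs := by
  unfold poissonCoeff
  split_ifs with h <;> simp [norm_pow] <;> congr 1 <;> omega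

lemma summable_norm_poissonCoeff {q : ℂ} (hq : ‖q‖ < 1) :
    Summable fun n => ‖poissonCoeff q n‖ := by
  have hg := summable_geometric_of_lt_one (norm_nonneg q) hq
  refine .of_nat_of_neg_add_one ?_ ?_ <;> simp only [norm_poissonCoeff]
  · simpa using hg
  · have e : ∀ n : ℕ, (-((n : ℤ) + 1)).natAbs = n + 1 := fun n => by omega
    simpa only [e] using (summable_nat_add_iff 1).2 hg

lemma poissonCoeff_mul_conj (q : ℂ) {u : ℂ} (hu : ‖u‖ = 1) (n : ℤ) :
    poissonCoeff (q * conj u) n = poissonCoeff q n * u ^ (-n) := by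
  unfold poissonCoeff
  split_ifs with h
  · lift n to ℕ using h
    simp [mul_pow, (RCLike.inv_eq_conj hu).symm]
  · obtain ⟨m, rfl⟩ := Int.exists_eq_neg_ofNat (le_of_lt (not_le.1 h))
    simp [mul_pow]

lemma ofReal_poissonKernel (z : ℂ) :
    (((1 - ‖z‖ ^ 2) / ‖1 - z‖ ^ 2 : ℝ) : ℂ) = (1 - z)⁻¹ + conj z * (1 - conj z)⁻¹ := by
  rcases eq_or_ne z 1 with rfl | hz
  · simp
  have h1 : 1 - z ≠ 0 := sub_ne_zero.2 hz.symm
  have h2 : 1 - conj z ≠ 0 := by rwa [← map_one (conj : ℂ →+* ℂ), ← map_sub, map_ne_zero]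
  have hsq : ∀ w : ℂ, ((‖w‖ : ℂ)) ^ 2 = w * conj w := fun w => by
    rw [Complex.mul_conj, Complex.normSq_eq_norm_sq]; push_cast; rfl
  push_cast
  rw [hsq, hsq, map_sub, map_one]
  field_simp
  ring

lemma hasSum_poissonCoeff_mul_zpow {q w : ℂ} (hq : ‖q‖ < 1) (hw : ‖w‖ = 1) :
    HasSum (fun n : ℤ => poissonCoeff q n * w ^ n)
      (((1 - ‖q‖ ^ 2) / ‖1 - q * w‖ ^ 2 : ℝ) : ℂ) := by
  have hqw : ‖q * w‖ < 1 := by rwa [norm_mul, hw, mul_one]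
  have hnorm : ‖q‖ = ‖q * w‖ := by rw [norm_mul, hw, mul_one]
  rw [hnorm, ofReal_poissonKernel]
  refine .of_nat_of_neg_add_one ?_ ?_
  · simpa [poissonCoeff, mul_pow] using hasSum_geometric_of_norm_lt_one hqw
  · have hc : ‖conj (q * w)‖ < 1 := by rwa [Complex.norm_conj]
    have e : ∀ m : ℕ, poissonCoeff q (-(m + 1)) * w ^ (-((m : ℤ) + 1))
        = conj (q * w) * conj (q * w) ^ m := fun m => by
      rw [poissonCoeff, if_neg (by omega), show (-(-((m : ℤ) + 1))).toNat = m + 1 by omega,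
        show -((m : ℤ) + 1) = -((m + 1 : ℕ) : ℤ) by push_cast; ring, zpow_neg, zpow_natCast,
        map_mul, (RCLike.inv_eq_conj hw).symm]
      ring
    simpa only [e] using (hasSum_geometric_of_norm_lt_one hc).mul_left (conj (q * w))

instance : IsFiniteMeasure circleMeasure := by
  unfold circleMeasure
  infer_instance

lemma measurable_exp_ofReal_mul_I : Measurable fun θ : ℝ => Complex.exp (θ * Complex.I) := by
  fun_prop

lemma ae_norm_eq_one_circleMeasure : ∀ᵐ z ∂circleMeasure, ‖z‖ = 1 := by
  rw [circleMeasure, ae_map_iff measurable_exp_ofReal_mul_I.aemeasurable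
    (measurableSet_eq_fun measurable_norm measurable_const)]
  exact ae_of_all _ fun θ => Complex.norm_exp_ofReal_mul_I θ

lemma integral_zpow_circleMeasure (n : ℤ) :
    ∫ z, z ^ n ∂circleMeasure = if n = 0 then ((2 * π : ℝ) : ℂ) else 0 := by
  rw [circleMeasure, integral_map measurable_exp_ofReal_mul_I.aemeasurable
    (by fun_prop), ← intervalIntegral.integral_of_le two_pi_pos.le]
  simp_rw [← Complex.exp_int_mul]
  rcases eq_or_ne n 0 with rfl | hn
  · simp
  · have hnI : (n : ℂ) * Complex.I ≠ 0 := by simp [hn]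
    have hlin : ∀ x : ℝ, (n : ℂ) * (x * Complex.I) = n * Complex.I * x := fun x => by ring
    simp_rw [hlin, integral_exp_mul_complex hnI]
    have hper : (n : ℂ) * Complex.I * (2 * π : ℝ) = n * (2 * π * Complex.I) := by push_cast; ring
    rw [hper, Complex.exp_int_mul_two_pi_mul_I]
    simp [hn]

lemma ae_norm_eq_one_circleMeasure_prod :
    ∀ᵐ p ∂(circleMeasure.prod circleMeasure), ‖p.1‖ = 1 ∧ ‖p.2‖ = 1 :=
  (Measure.quasiMeasurePreserving_fst.ae ae_norm_eq_one_circleMeasure).and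
    (Measure.quasiMeasurePreserving_snd.ae ae_norm_eq_one_circleMeasure)

lemma integrable_zpow_mul_zpow_circleMeasure_prod (a b : ℤ) :
    Integrable (fun p : ℂ × ℂ => p.1 ^ a * p.2 ^ b) (circleMeasure.prod circleMeasure) := by
  refine .of_bound (by fun_prop) 1 ?_
  filter_upwards [ae_norm_eq_one_circleMeasure_prod] with p hp
  simp [norm_zpow, hp.1, hp.2]

lemma integral_zpow_mul_zpow_circleMeasure_prod (a b : ℤ) :
    ∫ p : ℂ × ℂ, p.1 ^ a * p.2 ^ b ∂(circleMeasure.prod circleMeasure)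
      = if a = 0 ∧ b = 0 then 4 * (π : ℂ) ^ 2 else 0 := by
  rw [integral_prod_mul (fun z : ℂ => z ^ a) (fun z : ℂ => z ^ b),
    integral_zpow_circleMeasure, integral_zpow_circleMeasure]
  split_ifs <;> simp_all
  ring

lemma bcDensity_nonneg {ψ : ℂ} (hψ : ‖ψ‖ ≤ 1) (p : ℂ × ℂ) : 0 ≤ bcDensity ψ p := by
  have : 0 ≤ 1 - ‖ψ‖ ^ 2 := by nlinarith [norm_nonneg ψ]
  unfold bcDensity
  positivity

lemma measurable_bcDensity (ψ : ℂ) : Measurable (bcDensity ψ) := by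
  unfold bcDensity
  fun_prop

lemma hasSum_bcDensity {ψ u v : ℂ} (hψ : ‖ψ‖ < 1) (hu : ‖u‖ = 1) (hv : ‖v‖ = 1) :
    HasSum (fun n : ℤ => poissonCoeff ψ n * (u ^ (-n) * v ^ n) / (4 * π ^ 2))
      (bcDensity ψ (u, v) : ℂ) := by
  have hq : ‖ψ * conj u‖ = ‖ψ‖ := by rw [norm_mul, Complex.norm_conj, hu, mul_one]
  have hbc : (bcDensity ψ (u, v) : ℂ)
      = (((1 - ‖ψ * conj u‖ ^ 2) / ‖1 - ψ * conj u * v‖ ^ 2 : ℝ) : ℂ) / (4 * π ^ 2) := by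
    rw [bcDensity, hq, mul_right_comm ψ]
    push_cast
    ring
  have hterm : (fun n : ℤ => poissonCoeff ψ n * (u ^ (-n) * v ^ n) / (4 * π ^ 2))
      = fun n => poissonCoeff (ψ * conj u) n * v ^ n / (4 * π ^ 2) := by
    funext n
    rw [poissonCoeff_mul_conj ψ hu]
    ring
  rw [hbc, hterm]
  exact (hasSum_poissonCoeff_mul_zpow (hq ▸ hψ) hv).div_const _

lemma integral_BCplus {ψ : ℂ} (hψ : ‖ψ‖ ≤ 1) (g : ℂ × ℂ → ℂ) :
    ∫ p, g p ∂BCplus ψ = ∫ p, (bcDensity ψ p : ℂ) * g p ∂(circleMeasure.prod circleMeasure) := by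
  rw [BCplus, integral_withDensity_eq_integral_toReal_smul
    (measurable_bcDensity ψ).ennreal_ofReal (ae_of_all _ fun _ => ENNReal.ofReal_lt_top)]
  simp_rw [ENNReal.toReal_ofReal (bcDensity_nonneg hψ _), Complex.real_smul]

lemma integral_zpow_mul_zpow_BCplus {ψ : ℂ} (hψ : ‖ψ‖ < 1) (j k : ℤ) :
    ∫ p : ℂ × ℂ, p.1 ^ j * p.2 ^ k ∂BCplus ψ = if j = -k then poissonCoeff ψ j else 0 := by
  set μ := circleMeasure.prod circleMeasure
  set F : ℤ → ℂ × ℂ → ℂ := fun n p =>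
    poissonCoeff ψ n * (p.1 ^ (j - n) * p.2 ^ (k + n)) / (4 * π ^ 2) with hF
  have hexpand : (fun p => (bcDensity ψ p : ℂ) * (p.1 ^ j * p.2 ^ k)) =ᵐ[μ]
      fun p => ∑' n, F n p := by
    filter_upwards [ae_norm_eq_one_circleMeasure_prod] with p hp
    have hu : p.1 ≠ 0 := norm_ne_zero_iff.1 (by rw [hp.1]; exact one_ne_zero)
    have hv : p.2 ≠ 0 := norm_ne_zero_iff.1 (by rw [hp.2]; exact one_ne_zero)
    rw [← ((hasSum_bcDensity hψ hp.1 hp.2).mul_right (p.1 ^ j * p.2 ^ k)).tsum_eq]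
    congr 1
    funext n
    simp only [hF]
    rw [sub_eq_neg_add, zpow_add₀ hu, add_comm k, zpow_add₀ hv]
    ring
  have hintegral : ∀ n, ∫ p, F n p ∂μ
      = if n = j then (if j = -k then poissonCoeff ψ j else 0) else 0 := by
    intro n
    have hπ : (π : ℂ) ≠ 0 := Complex.ofReal_ne_zero.2 pi_ne_zero
    simp only [hF]
    rw [integral_div, integral_const_mul, integral_zpow_mul_zpow_circleMeasure_prod]
    split_ifs with _ hn <;> first | omega | simp
    · subst hn
      field_simp
  have hnorm : ∀ n, ∫ p, ‖F n p‖ ∂μ = ‖poissonCoeff ψ n‖ / (4 * π ^ 2) * μ.real Set.univ := by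
    intro n
    rw [mul_comm, ← smul_eq_mul, ← integral_const]
    refine integral_congr_ae ?_
    filter_upwards [ae_norm_eq_one_circleMeasure_prod] with p hp
    simp [hF, norm_zpow, hp.1, hp.2]
  rw [integral_BCplus hψ.le, integral_congr_ae hexpand, ← integral_tsum_of_summable_integral_norm]
  · simp_rw [hintegral]
    exact tsum_ite_eq j _
  · exact fun n => ((integrable_zpow_mul_zpow_circleMeasure_prod _ _).const_mul _).div_const _
  · simp_rw [hnorm]
    exact ((summable_norm_poissonCoeff hψ).div_const _).mul_right _

lemma BCplus_ne_zero {ψ : ℂ} (hψ : ‖ψ‖ < 1) : BCplus ψ ≠ 0 := by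
  intro h
  simpa [h, poissonCoeff] using integral_zpow_mul_zpow_BCplus hψ 0 0

theorem bcplus_moments_general {α : Type*} [MeasurableSpace α] (P : Measure α)
    (ψ : ℂ) (hψ : ‖ψ‖ < 1)
    (ZU ZV : α → ℂ)
    (hlaw : Measure.map (fun ω => (ZU ω, ZV ω)) P = BCplus ψ) (j k : ℤ) :
    ∫ ω, ZU ω ^ j * ZV ω ^ k ∂P
      = if j = -k then
          (if 0 ≤ j then ψ ^ j.toNat else (starRingEnd ℂ) ψ ^ (-j).toNat)
        else 0 := by
  have hpair : AEMeasurable (fun ω => (ZU ω, ZV ω)) P := by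
    by_contra h
    exact BCplus_ne_zero hψ (hlaw ▸ Measure.map_of_not_aemeasurable h)
  have hmonomial : Measurable fun p : ℂ × ℂ => p.1 ^ j * p.2 ^ k := by fun_prop
  calc ∫ ω, ZU ω ^ j * ZV ω ^ k ∂P = ∫ p : ℂ × ℂ, p.1 ^ j * p.2 ^ k ∂BCplus ψ := by
        rw [← hlaw, integral_map hpair hmonomial.aestronglyMeasurable]
    _ = _ := integral_zpow_mul_zpow_BCplus hψ j k

/-- moments of `BC₊(ψ)`: for `j, k ∈ ℤ`,
`E(Z_U^j Z_V^k) = ψ^j` if `j = -k ≥ 0`, `conj(ψ)^{-j}` if `j = -k < 0`, and `0` otherwise. -/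
theorem bcplus_moments {α : Type*} [MeasurableSpace α] (P : Measure α)
    [IsProbabilityMeasure P] (ψ : ℂ) (hψ : ‖ψ‖ < 1)
    (ZU ZV : α → ℂ)
    (hlaw : Measure.map (fun ω => (ZU ω, ZV ω)) P = BCplus ψ) (j k : ℤ) :
    ∫ ω, ZU ω ^ j * ZV ω ^ k ∂P
      = if j = -k then
          (if 0 ≤ j then ψ ^ j.toNat else (starRingEnd ℂ) ψ ^ (-j).toNat)
        else 0 :=
  bcplus_moments_general P ψ hψ ZU ZV hlaw j k
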